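/- Sufficient KYP condition for positive realness (Freund–Jarre): a descriptor system (E,A,B,C,D) is positive real if there exists Q ∈ ℝ^{n×n} such that the matrix [[A^T Q + Q^T A, Q^T B − C^T],[B^T Q − C, −D − D^T]] is negative semidefinite and E^T Q is symmetric positive semidefinite (assuming the pencil (E,A) is regular so that the transfer function is defined and the system has no poles in the open right half-plane, i.e. det(sE−A) ≠ 0 for Re(s) > 0). -/

import Mathlib

open Matrix
open scoped ComplexOrder

/-- View a real matrix as a complex matrix. -/
noncomputable def toC {k l : Type*} (M : Matrix k l ℝ) : Matrix k l ℂ :=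
  M.map (fun x => (x : ℂ))

/-- The matrix pencil `s E - A`, viewed over `ℂ`. -/
noncomputable def pencil {n : ℕ} (E A : Matrix (Fin n) (Fin n) ℝ) (s : ℂ) :
    Matrix (Fin n) (Fin n) ℂ :=
  s • toC E - toC A

/-- The transfer function `T(s) = C (sE - A)⁻¹ B + D` of the descriptor system. -/
noncomputable def transfer {n m : ℕ} (E A : Matrix (Fin n) (Fin n) ℝ)
    (B : Matrix (Fin n) (Fin m) ℝ) (C : Matrix (Fin m) (Fin n) ℝ)
    (D : Matrix (Fin m) (Fin m) ℝ) (s : ℂ) : Matrix (Fin m) (Fin m) ℂ :=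
  toC C * (pencil E A s)⁻¹ * toC B + toC D

/-- A descriptor system is positive real if the pencil is invertible on the open right
half-plane and `T(s) + T(s)ᴴ` is positive semidefinite there. -/
def PositiveReal {n m : ℕ} (E A : Matrix (Fin n) (Fin n) ℝ)
    (B : Matrix (Fin n) (Fin m) ℝ) (C : Matrix (Fin m) (Fin n) ℝ)
    (D : Matrix (Fin m) (Fin m) ℝ) : Prop :=
  ∀ s : ℂ, 0 < s.re → (pencil E A s).det ≠ 0 ∧
    (transfer E A B C D s + (transfer E A B C D s)ᴴ).PosSemidef

/-- Complete controllability: `[αE - βA, B]` has full row rank for all `(α,β) ≠ (0,0)`. -/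
def CompletelyControllable {n m : ℕ} (E A : Matrix (Fin n) (Fin n) ℝ)
    (B : Matrix (Fin n) (Fin m) ℝ) : Prop :=
  ∀ α β : ℂ, ¬(α = 0 ∧ β = 0) →
    (fromCols (α • toC E - β • toC A) (toC B)).rank = n

/-- Complete observability: `[αE - βA; C]` has full column rank for all `(α,β) ≠ (0,0)`. -/
def CompletelyObservable {n m : ℕ} (E A : Matrix (Fin n) (Fin n) ℝ)
    (C : Matrix (Fin m) (Fin n) ℝ) : Prop :=
  ∀ α β : ℂ, ¬(α = 0 ∧ β = 0) →
    (fromRows (α • toC E - β • toC A) (toC C)).rank = n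

/-- A descriptor system `(E,A,B,C,D)` is port-Hamiltonian if it admits a pH decomposition. -/
def IsPortHamiltonian {n m : ℕ} (E A : Matrix (Fin n) (Fin n) ℝ)
    (B : Matrix (Fin n) (Fin m) ℝ) (C : Matrix (Fin m) (Fin n) ℝ)
    (D : Matrix (Fin m) (Fin m) ℝ) : Prop :=
  ∃ (J R Q : Matrix (Fin n) (Fin n) ℝ) (G P : Matrix (Fin n) (Fin m) ℝ),
    A = (J - R) * Q ∧ B = G - P ∧ C = (G + P)ᵀ * Q ∧ Jᵀ = -J ∧
    (Eᵀ * Q).PosSemidef ∧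
    (fromBlocks (Qᵀ * R * Q) (Qᵀ * P) (Pᵀ * Q) ((1/2 : ℝ) • (D + Dᵀ))).PosSemidef

/-- The KYP block matrix `[[AᵀQ + QᵀA, QᵀB - Cᵀ], [BᵀQ - C, -D - Dᵀ]]`. -/
def KYPmatrix {n m : ℕ} (A : Matrix (Fin n) (Fin n) ℝ)
    (B : Matrix (Fin n) (Fin m) ℝ) (C : Matrix (Fin m) (Fin n) ℝ)
    (D : Matrix (Fin m) (Fin m) ℝ) (Q : Matrix (Fin n) (Fin n) ℝ) :
    Matrix (Fin n ⊕ Fin m) (Fin n ⊕ Fin m) ℝ :=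
  fromBlocks (Aᵀ * Q + Qᵀ * A) (Qᵀ * B - Cᵀ) (Bᵀ * Q - C) (-D - Dᵀ)

/-!
Fix `s` with `Re s > 0`, put `X = (sE - A)⁻¹ B` and `V = [X; 1]`. Substituting `B = (sE - A) X`
into `Vᴴ K V` and using `Qᴴ E = Eᴴ Q` gives
`T(s) + T(s)ᴴ = 2 Re(s) • Xᴴ (Eᴴ Q) X + Vᴴ (-K) V`,
a sum of two positive semidefinite matrices. Over `ℝ` the KYP matrix is the complex one with
`ᴴ = ᵀ`, and complexification preserves positive semidefiniteness.
-/

section toC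

variable {k l p : Type*}

lemma toC_add (M N : Matrix k l ℝ) : toC (M + N) = toC M + toC N := by
  ext; simp [toC]

lemma toC_sub (M N : Matrix k l ℝ) : toC (M - N) = toC M - toC N := by
  ext; simp [toC]

lemma toC_neg (M : Matrix k l ℝ) : toC (-M) = -toC M := by
  ext; simp [toC]

lemma toC_mul [Fintype l] (M : Matrix k l ℝ) (N : Matrix l p ℝ) :
    toC (M * N) = toC M * toC N := by
  ext; simp [toC, mul_apply]

lemma toC_transpose (M : Matrix k l ℝ) : toC Mᵀ = (toC M)ᴴ := by
  ext; simp [toC]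

lemma toC_fromBlocks {k' l' : Type*} (M₁₁ : Matrix k l ℝ) (M₁₂ : Matrix k l' ℝ)
    (M₂₁ : Matrix k' l ℝ) (M₂₂ : Matrix k' l' ℝ) :
    toC (fromBlocks M₁₁ M₁₂ M₂₁ M₂₂) = fromBlocks (toC M₁₁) (toC M₁₂) (toC M₂₁) (toC M₂₂) := by
  ext (i | i) (j | j) <;> rfl

lemma Matrix.PosSemidef.toC [Fintype k] {M : Matrix k k ℝ} (hM : M.PosSemidef) :
    (toC M).PosSemidef := by
  classical
  obtain ⟨L, rfl⟩ : ∃ L : Matrix k k ℝ, M = star L * L := by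
    open scoped MatrixOrder Matrix.Norms.L2Operator in
    exact CStarAlgebra.nonneg_iff_eq_star_mul_self.mp hM.nonneg
  rw [toC_mul, star_eq_conjTranspose, conjTranspose_eq_transpose_of_trivial, toC_transpose]
  exact posSemidef_conjTranspose_mul_self _

end toC

theorem fromCols_mul_fromBlocks_mul_fromRows {R l n₁ n₂ p : Type*} [Semiring R]
    [Fintype n₁] [Fintype n₂]
    (X₁ : Matrix l n₁ R) (X₂ : Matrix l n₂ R) (P₁₁ : Matrix n₁ n₁ R) (P₁₂ : Matrix n₁ n₂ R)
    (P₂₁ : Matrix n₂ n₁ R) (P₂₂ : Matrix n₂ n₂ R) (Y₁ : Matrix n₁ p R) (Y₂ : Matrix n₂ p R) :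
    fromCols X₁ X₂ * fromBlocks P₁₁ P₁₂ P₂₁ P₂₂ * fromRows Y₁ Y₂ =
      X₁ * P₁₁ * Y₁ + X₁ * P₁₂ * Y₂ + X₂ * P₂₁ * Y₁ + X₂ * P₂₂ * Y₂ := by
  simp only [fromCols_mul_fromBlocks, fromCols_mul_fromRows, Matrix.add_mul, Matrix.mul_assoc]
  abel

section KYP

variable {R : Type*} [CommRing R] [StarRing R] {n m : Type*} [Fintype n] [Fintype m]

def kypForm (A : Matrix n n R) (B : Matrix n m R) (C : Matrix m n R) (D : Matrix m m R)
    (Q : Matrix n n R) : Matrix (n ⊕ m) (n ⊕ m) R :=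
  fromBlocks (Aᴴ * Q + Qᴴ * A) (Qᴴ * B - Cᴴ) (Bᴴ * Q - C) (-D - Dᴴ)

theorem fromCols_mul_kypForm_mul_fromRows [DecidableEq m] {E A Q : Matrix n n R}
    {B X : Matrix n m R} (C : Matrix m n R) (D : Matrix m m R) {s : R} (hX : (s • E - A) * X = B)
    (hEQ : Qᴴ * E = Eᴴ * Q) :
    fromCols Xᴴ (1 : Matrix m m R) * kypForm A B C D Q * fromRows X (1 : Matrix m m R) =
      (s + star s) • (Xᴴ * (Eᴴ * Q) * X) - (C * X + D + (C * X + D)ᴴ) := by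
  have hQB : Qᴴ * B = s • (Eᴴ * Q * X) - Qᴴ * A * X := by
    rw [← hX, ← hEQ, Matrix.sub_mul, Matrix.mul_sub, Matrix.smul_mul, Matrix.mul_smul,
      Matrix.mul_assoc, Matrix.mul_assoc]
  have hBQ : Bᴴ * Q = star s • (Xᴴ * (Eᴴ * Q)) - Xᴴ * Aᴴ * Q := by
    simpa only [conjTranspose_mul, conjTranspose_sub, conjTranspose_smul,
      conjTranspose_conjTranspose, hEQ, Matrix.mul_assoc] using
      congrArg conjTranspose hQB
  rw [kypForm, fromCols_mul_fromBlocks_mul_fromRows, hQB, hBQ]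
  simp only [conjTranspose_add, conjTranspose_mul, Matrix.one_mul, Matrix.mul_one,
    Matrix.mul_add, Matrix.add_mul, Matrix.mul_sub, Matrix.sub_mul, Matrix.mul_smul,
    Matrix.smul_mul, Matrix.mul_assoc, add_smul]
  abel

end KYP

theorem posSemidef_add_conjTranspose_of_kypForm {n m : Type*} [Fintype n] [Fintype m]
    [DecidableEq m] {E A Q : Matrix n n ℂ} {B X : Matrix n m ℂ} {C : Matrix m n ℂ}
    {D : Matrix m m ℂ} {s : ℂ} (hs : 0 ≤ s.re) (hX : (s • E - A) * X = B)
    (hK : (-kypForm A B C D Q).PosSemidef) (hEQ : (Eᴴ * Q).PosSemidef) :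
    (C * X + D + (C * X + D)ᴴ).PosSemidef := by
  have hsym : Qᴴ * E = Eᴴ * Q := by
    simpa only [conjTranspose_mul, conjTranspose_conjTranspose] using hEQ.isHermitian.eq
  have hsplit : C * X + D + (C * X + D)ᴴ = (s + star s) • (Xᴴ * (Eᴴ * Q) * X) +
      fromCols Xᴴ (1 : Matrix m m ℂ) * -kypForm A B C D Q * fromRows X (1 : Matrix m m ℂ) := by
    rw [Matrix.mul_neg, Matrix.neg_mul, fromCols_mul_kypForm_mul_fromRows C D hX hsym]
    abel
  have hsconj : 0 ≤ s + star s := by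
    rw [Complex.star_def, Complex.add_conj]
    exact_mod_cast mul_nonneg zero_le_two hs
  rw [hsplit]
  refine .add (.smul (hEQ.conjTranspose_mul_mul_same X) hsconj) ?_
  simpa only [conjTranspose_fromRows_eq_fromCols_conjTranspose, conjTranspose_one] using
    hK.conjTranspose_mul_mul_same (fromRows X (1 : Matrix m m ℂ))

lemma toC_KYPmatrix {n m : ℕ} (A : Matrix (Fin n) (Fin n) ℝ) (B : Matrix (Fin n) (Fin m) ℝ)
    (C : Matrix (Fin m) (Fin n) ℝ) (D : Matrix (Fin m) (Fin m) ℝ)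
    (Q : Matrix (Fin n) (Fin n) ℝ) :
    toC (KYPmatrix A B C D Q) = kypForm (toC A) (toC B) (toC C) (toC D) (toC Q) := by
  simp only [KYPmatrix, kypForm, toC_fromBlocks, toC_add, toC_sub, toC_neg, toC_mul,
    toC_transpose]

/-- Sufficient KYP condition for positive realness (Freund–Jarre). -/
theorem KYP_implies_positive_real {n m : ℕ}
    (E A : Matrix (Fin n) (Fin n) ℝ) (B : Matrix (Fin n) (Fin m) ℝ)
    (C : Matrix (Fin m) (Fin n) ℝ) (D : Matrix (Fin m) (Fin m) ℝ)
    (hreg : ∀ s : ℂ, 0 < s.re → (pencil E A s).det ≠ 0)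
    (hQ : ∃ Q : Matrix (Fin n) (Fin n) ℝ,
      (-(KYPmatrix A B C D Q)).PosSemidef ∧ (Eᵀ * Q).PosSemidef) :
    PositiveReal E A B C D := by
  obtain ⟨Q, hK, hEQ⟩ := hQ
  intro s hs
  have hX : pencil E A s * ((pencil E A s)⁻¹ * toC B) = toC B :=
    mul_nonsing_inv_cancel_left _ _ (isUnit_iff_ne_zero.mpr (hreg s hs))
  have hKC : (-kypForm (toC A) (toC B) (toC C) (toC D) (toC Q)).PosSemidef := by
    simpa only [toC_neg, toC_KYPmatrix] using hK.toC
  have hEQC : ((toC E)ᴴ * toC Q).PosSemidef := by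
    simpa only [toC_mul, toC_transpose] using hEQ.toC
  refine ⟨hreg s hs, ?_⟩
  simpa only [transfer, Matrix.mul_assoc] using
    posSemidef_add_conjTranspose_of_kypForm hs.le hX hKC hEQC
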